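/- arXiv:1306.0377 — 2 statements merged into one kernel-verified Lean document; each statement's English description precedes it below -/
import Mathlib

section
/- Let X be a set with a parent relation whose ancestor relation is well-founded, and suppose there is a constant c ≥ 1 such that for every P ∈ X, every descendant-free subset of anc(P) has at most c elements. Then for any finite sets U ⊆ V ⊆ X, #free(U) ≤ c · #free(V), where free(S) = {P ∈ S : desc(P) ∩ S = ∅}. -/
/-!
Send every free element `p` of `U` to a free element `f p` of `V` that is `p` itself or one of
its descendants: one exists because `V` is finite and the descendant relation is a strict order.
Distinct free elements of `U` are incomparable, so a fibre of `f` over `v` is either `{v}`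
(when `v ∈ U`) or a descendant-free subset of `anc(v)`; in both cases it has at most `c`
elements.
-/

open Set

theorem Set.ncard_le_mul_ncard_of_mapsTo {α β : Type*} {s : Set α} {t : Set β} {f : α → β}
    (hs : s.Finite) (ht : t.Finite) (hf : MapsTo f s t) (n : ℕ)
    (hn : ∀ b ∈ t, {a ∈ s | f a = b}.ncard ≤ n) : s.ncard ≤ n * t.ncard := by
  classical
  rw [ncard_eq_toFinset_card s hs, ncard_eq_toFinset_card t ht]
  refine Finset.card_le_mul_card_image_of_maps_to
    (fun a ha => by simpa using hf (by simpa using ha)) n fun b hb => ?_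
  convert hn b (by simpa using hb) using 1
  rw [← ncard_coe_finset]
  congr 1
  ext a
  simp

section Free

variable {α : Type*} (R : α → α → Prop)

/-- `free R S` is the paper's `free(S)` when `R p q` reads "`q` is a strict descendant of `p`". -/
def free (S : Set α) : Set α := {p ∈ S | ∀ q, R p q → q ∉ S}

variable {R}

theorem free_subset (S : Set α) : free R S ⊆ S := sep_subset _ _

theorem not_rel_of_mem_free {S : Set α} {p q : α} (hp : p ∈ free R S) (hq : q ∈ free R S) :
    ¬ R p q :=
  fun hpq => hp.2 q hpq hq.1

theorem Set.Finite.exists_mem_free_of_mem [IsStrictOrder α R] {V : Set α} (hV : V.Finite)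
    {p : α} (hp : p ∈ V) : ∃ v ∈ free R V, p = v ∨ R p v := by
  set T := {q ∈ V | p = q ∨ R p q}
  have hT : T.WellFoundedOn (Function.swap R) := (hV.subset (sep_subset _ _)).wellFoundedOn
  obtain ⟨v, ⟨hvV, hpv⟩, hmax⟩ := (wellFoundedOn_iff.mp hT).has_min T ⟨p, hp, Or.inl rfl⟩
  refine ⟨v, ⟨hvV, fun q hvq hqV => ?_⟩, hpv⟩
  have hqT : q ∈ T := ⟨hqV, Or.inr (hpv.elim (· ▸ hvq) (fun h => _root_.trans h hvq))⟩
  exact hmax q hqT ⟨hvq, hqT, hvV, hpv⟩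

theorem ncard_free_eq_or_rel_le {c : ℕ} (hc : 1 ≤ c)
    (hbound : ∀ (P : α) (S : Set α), S ⊆ {Q | R Q P} → (∀ p ∈ S, ∀ q ∈ S, ¬ R p q) →
      S.ncard ≤ c)
    (U : Set α) (v : α) : {p ∈ free R U | p = v ∨ R p v}.ncard ≤ c := by
  by_cases hvU : v ∈ U
  · have hsub : {p ∈ free R U | p = v ∨ R p v} ⊆ {v} := fun p ⟨hp, hpv⟩ =>
      hpv.resolve_right fun h => hp.2 v h hvU
    calc _ ≤ ({v} : Set α).ncard := ncard_le_ncard hsub (finite_singleton v)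
      _ = 1 := ncard_singleton v
      _ ≤ c := hc
  · refine hbound v _ (fun p ⟨hp, hpv⟩ => hpv.resolve_left ?_)
      fun p hp q hq => not_rel_of_mem_free hp.1 hq.1
    rintro rfl
    exact hvU hp.1

end Free

/-- If every descendant-free subset of any ancestor set `anc(P)` has at most `c ≥ 1`
elements, then for finite sets `U ⊆ V`, `#free(U) ≤ c · #free(V)`, where
`free(S) = {P ∈ S : desc(P) ∩ S = ∅}`. -/
theorem stmt_9 {X : Type*} (parent : X → X → Prop)
    (hwf : WellFounded (Relation.TransGen parent))
    (c : ℕ) (hc : 1 ≤ c)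
    (hbound : ∀ (P : X) (S : Set X), S ⊆ {Q | Relation.TransGen parent Q P} →
      (∀ p ∈ S, ∀ q ∈ S, ¬ Relation.TransGen parent p q) → S.ncard ≤ c)
    (U V : Set X) (hUV : U ⊆ V) (hV : V.Finite) :
    {p ∈ U | ∀ q, Relation.TransGen parent p q → q ∉ U}.ncard
      ≤ c * {p ∈ V | ∀ q, Relation.TransGen parent p q → q ∉ V}.ncard := by
  set R := Relation.TransGen parent
  have : IsStrictOrder X R := { hwf.irrefl with }
  have hfree : ∀ p ∈ V, ∃ v ∈ free R V, p = v ∨ R p v := fun p hp => hV.exists_mem_free_of_mem hp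
  choose! f hf using hfree
  have hU : (free R U).Finite := (hV.subset hUV).subset (free_subset U)
  refine ncard_le_mul_ncard_of_mapsTo hU (hV.subset (free_subset V))
    (fun p hp => (hf p (hUV hp.1)).1) c fun v _ => ?_
  have hfibre : {p ∈ free R U | f p = v} ⊆ {p ∈ free R U | p = v ∨ R p v} :=
    fun p ⟨hp, hpv⟩ => ⟨hp, hpv ▸ (hf p (hUV hp.1)).2⟩
  exact (ncard_le_ncard hfibre (hU.subset (sep_subset _ _))).trans
    (ncard_free_eq_or_rel_le hc hbound U v)
end

section
/- Let E : S → ℝ_{≥0} be a nonnegative function on a finite set S, and let R : S → Finset S assign to each s the set R(s) ⊆ S of elements that must be refined together with s. Define Ē² := max_{s∈S} Σ_{t∈R(s)} E(t)². Run the following greedy procedure with parameter μ ∈ (0,1]: iterate over S; maintain M, M̃ (initially empty) and a candidate set C (initially S); when selecting s ∈ C, if Σ_{t ∈ R(s)\M̃} E(t)² ≥ μ Ē², add s to M and R(s) to M̃; in either case remove R(s) from C. Then upon termination M ≠ ∅ and Σ_{t∈M̃} E(t)² ≥ μ (#M) Ē², provided Ē² > 0 and R(s') ⊆ R(s) for all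 s' ∈ R(s). -/
/-!
Marking `s` adds at least the threshold `θ = μ Ē²` to the accumulated sum, since the newly
refined part `R(s) \ M̃` is exactly what the test measures; this gives `θ #M ≤ Σ_{M̃} E²`.
For nonemptiness take `s₀` attaining `Ē²`. As long as nothing is marked, `M̃ = ∅` and `s₀` is
still a candidate; the first selected `s` with `s₀ ∈ R(s)` (at the latest `s₀` itself) then
passes the test, because heredity gives `R(s₀) ⊆ R(s)` and so `Σ_{R(s)} E² ≥ Ē² ≥ μ Ē²`.
-/

open Finset

namespace MaximumMarking

variable {S : Type*} [DecidableEq S]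

/-- One step of the greedy procedure on the state `(M, M̃, C)`; `w` plays the role of `E²`. -/
noncomputable def markStep (w : S → ℝ) (R : S → Finset S) (θ : ℝ) :
    Finset S × Finset S × Finset S → S → Finset S × Finset S × Finset S
  | (M, Mt, C), s =>
    if s ∈ C then
      (if θ ≤ ∑ t ∈ R s \ Mt, w t
        then (insert s M, Mt ∪ R s, C \ R s)
        else (M, Mt, C \ R s))
    else (M, Mt, C)

variable (w : S → ℝ) (R : S → Finset S) (θ : ℝ)

theorem candidates_markStep_subset (st : Finset S × Finset S × Finset S) (s : S) :
    (markStep w R θ st s).2.2 ⊆ st.2.2 := by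
  obtain ⟨M, Mt, C⟩ := st
  dsimp only [markStep]
  split_ifs <;> simp [sdiff_subset]

theorem not_mem_candidates_markStep {s : S} (hs : s ∈ R s)
    (st : Finset S × Finset S × Finset S) : s ∉ (markStep w R θ st s).2.2 := by
  obtain ⟨M, Mt, C⟩ := st
  dsimp only [markStep]
  split_ifs with hsC <;> simp [hs, hsC]

theorem candidates_foldl_markStep_subset (l : List S) (st : Finset S × Finset S × Finset S) :
    (l.foldl (markStep w R θ) st).2.2 ⊆ st.2.2 := by
  induction l generalizing st with
  | nil => exact subset_rfl
  | cons a l ih => exact (ih _).trans (candidates_markStep_subset w R θ st a)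

theorem not_mem_candidates_foldl_markStep (hself : ∀ s, s ∈ R s) {l : List S} {s : S}
    (hs : s ∈ l) (st : Finset S × Finset S × Finset S) :
    s ∉ (l.foldl (markStep w R θ) st).2.2 := by
  induction l generalizing st with
  | nil => simp at hs
  | cons a l ih =>
    rcases List.mem_cons.mp hs with rfl | hs
    · exact fun h => not_mem_candidates_markStep w R θ (hself s) st
        (candidates_foldl_markStep_subset w R θ l _ h)
    · exact ih hs _

theorem card_mul_le_sum_markStep (hθ : 0 ≤ θ) {st : Finset S × Finset S × Finset S}
    (h : θ * #st.1 ≤ ∑ t ∈ st.2.1, w t) (s : S) :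
    θ * #(markStep w R θ st s).1 ≤ ∑ t ∈ (markStep w R θ st s).2.1, w t := by
  obtain ⟨M, Mt, C⟩ := st
  dsimp only [markStep]
  split_ifs with _ htest
  · have hcard : (#(insert s M) : ℝ) ≤ #M + 1 := by exact_mod_cast card_insert_le s M
    calc θ * #(insert s M) ≤ θ * #M + θ := by nlinarith
      _ ≤ ∑ t ∈ Mt, w t + ∑ t ∈ R s \ Mt, w t := add_le_add h htest
      _ = ∑ t ∈ Mt ∪ R s, w t := by
        rw [← union_sdiff_self_eq_union, sum_union disjoint_sdiff]
  all_goals exact h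

theorem card_mul_le_sum_foldl_markStep (hθ : 0 ≤ θ) (l : List S)
    {st : Finset S × Finset S × Finset S} (h : θ * #st.1 ≤ ∑ t ∈ st.2.1, w t) :
    θ * #(l.foldl (markStep w R θ) st).1 ≤ ∑ t ∈ (l.foldl (markStep w R θ) st).2.1, w t := by
  induction l generalizing st with
  | nil => exact h
  | cons a l ih => exact ih (card_mul_le_sum_markStep w R θ hθ h a)

def Unmarked (s₀ : S) (st : Finset S × Finset S × Finset S) : Prop :=
  st.1 = ∅ → st.2.1 = ∅ ∧ s₀ ∈ st.2.2

variable {w R θ}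

theorem unmarked_markStep (hw : ∀ t, 0 ≤ w t) (hhered : ∀ s, ∀ s' ∈ R s, R s' ⊆ R s)
    {s₀ : S} (hs₀ : θ ≤ ∑ t ∈ R s₀, w t) {st : Finset S × Finset S × Finset S}
    (h : Unmarked s₀ st) (s : S) : Unmarked s₀ (markStep w R θ st s) := by
  obtain ⟨M, Mt, C⟩ := st
  dsimp only [markStep, Unmarked] at *
  split_ifs with _ htest
  · simp
  · intro hM
    obtain ⟨rfl, hs₀C⟩ := h hM
    refine ⟨rfl, mem_sdiff.mpr ⟨hs₀C, fun hs₀R => htest ?_⟩⟩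
    rw [sdiff_empty]
    exact hs₀.trans (sum_le_sum_of_subset_of_nonneg (hhered s s₀ hs₀R) fun t _ _ => hw t)
  · exact h

theorem unmarked_foldl_markStep (hw : ∀ t, 0 ≤ w t) (hhered : ∀ s, ∀ s' ∈ R s, R s' ⊆ R s)
    {s₀ : S} (hs₀ : θ ≤ ∑ t ∈ R s₀, w t) (l : List S) {st : Finset S × Finset S × Finset S}
    (h : Unmarked s₀ st) : Unmarked s₀ (l.foldl (markStep w R θ) st) := by
  induction l generalizing st with
  | nil => exact h
  | cons a l ih => exact ih (unmarked_markStep hw hhered hs₀ h a)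

theorem marked_foldl_markStep_nonempty (hw : ∀ t, 0 ≤ w t) (hself : ∀ s, s ∈ R s)
    (hhered : ∀ s, ∀ s' ∈ R s, R s' ⊆ R s) {s₀ : S} (hs₀ : θ ≤ ∑ t ∈ R s₀, w t)
    {l : List S} (hs₀l : s₀ ∈ l) {C : Finset S} (hs₀C : s₀ ∈ C) :
    (l.foldl (markStep w R θ) (∅, ∅, C)).1 ≠ ∅ := fun hM =>
  not_mem_candidates_foldl_markStep w R θ hself hs₀l _
    (unmarked_foldl_markStep hw hhered hs₀ l (fun _ => ⟨rfl, hs₀C⟩) hM).2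

end MaximumMarking

open MaximumMarking

theorem stmt_15_general {S : Type*} [Fintype S] [DecidableEq S] [Nonempty S]
    (E : S → ℝ)
    (R : S → Finset S) (hself : ∀ s, s ∈ R s)
    (hhered : ∀ s, ∀ s' ∈ R s, R s' ⊆ R s)
    (μ : ℝ) (hμ0 : 0 < μ) (hμ1 : μ ≤ 1)
    (Ebar2 : ℝ)
    (hEbar : Ebar2 = Finset.univ.sup' Finset.univ_nonempty (fun s => ∑ t ∈ R s, (E t) ^ 2))
    (step : Finset S × Finset S × Finset S → S → Finset S × Finset S × Finset S)
    (hstep : ∀ (M Mt C : Finset S) (s : S), step (M, Mt, C) s =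
      if s ∈ C then
        (if μ * Ebar2 ≤ ∑ t ∈ R s \ Mt, (E t) ^ 2
          then (insert s M, Mt ∪ R s, C \ R s)
          else (M, Mt, C \ R s))
      else (M, Mt, C))
    (l : List S) (hlall : ∀ s, s ∈ l)
    (res : Finset S × Finset S × Finset S)
    (hres : res = l.foldl step (∅, ∅, Finset.univ)) :
    res.1 ≠ ∅ ∧ μ * res.1.card * Ebar2 ≤ ∑ t ∈ res.2.1, (E t) ^ 2 := by
  obtain ⟨s₀, -, hs₀⟩ := exists_mem_eq_sup' univ_nonempty fun s => ∑ t ∈ R s, E t ^ 2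
  rw [hs₀] at hEbar
  have hstep_eq : step = markStep (fun t => E t ^ 2) R (μ * Ebar2) := by
    funext ⟨M, Mt, C⟩ s
    exact hstep M Mt C s
  have hEbar_nonneg : 0 ≤ Ebar2 := hEbar ▸ sum_nonneg fun t _ => sq_nonneg (E t)
  subst hres hstep_eq
  refine ⟨marked_foldl_markStep_nonempty (fun t => sq_nonneg (E t)) hself hhered
    (hEbar ▸ mul_le_of_le_one_left hEbar_nonneg hμ1) (hlall s₀) (mem_univ s₀), ?_⟩
  rw [mul_right_comm]
  exact card_mul_le_sum_foldl_markStep _ R _ (mul_nonneg hμ0.le hEbar_nonneg) l (by simp)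

/-- Abstract modified maximum marking strategy (Proposition 5.2): iterating the greedy
procedure over an enumeration `l` of the finite set `S` with accumulated indicators
`Σ_{t∈R(s)} E(t)²`, maximal value `Ebar2 > 0` and parameter `μ ∈ (0,1]`, the resulting
set of marked elements `M = res.1` is nonempty and the accumulated set `M̃ = res.2.1`
satisfies `Σ_{t∈M̃} E(t)² ≥ μ #M Ebar2`, provided `s ∈ R s` and `R` is hereditary. -/
theorem stmt_15 {S : Type*} [Fintype S] [DecidableEq S] [Nonempty S]
    (E : S → ℝ) (hE : ∀ s, 0 ≤ E s)
    (R : S → Finset S) (hself : ∀ s, s ∈ R s)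
    (hhered : ∀ s, ∀ s' ∈ R s, R s' ⊆ R s)
    (μ : ℝ) (hμ0 : 0 < μ) (hμ1 : μ ≤ 1)
    (Ebar2 : ℝ)
    (hEbar : Ebar2 = Finset.univ.sup' Finset.univ_nonempty (fun s => ∑ t ∈ R s, (E t) ^ 2))
    (hEpos : 0 < Ebar2)
    (step : Finset S × Finset S × Finset S → S → Finset S × Finset S × Finset S)
    (hstep : ∀ (M Mt C : Finset S) (s : S), step (M, Mt, C) s =
      if s ∈ C then
        (if μ * Ebar2 ≤ ∑ t ∈ R s \ Mt, (E t) ^ 2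
          then (insert s M, Mt ∪ R s, C \ R s)
          else (M, Mt, C \ R s))
      else (M, Mt, C))
    (l : List S) (hl : l.Nodup) (hlall : ∀ s, s ∈ l)
    (res : Finset S × Finset S × Finset S)
    (hres : res = l.foldl step (∅, ∅, Finset.univ)) :
    res.1 ≠ ∅ ∧ μ * res.1.card * Ebar2 ≤ ∑ t ∈ res.2.1, (E t) ^ 2 :=
  stmt_15_general E R hself hhered μ hμ0 hμ1 Ebar2 hEbar step hstep l hlall res hres
end
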